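/- arXiv:1111.3658 — 5 statements merged into one kernel-verified Lean document; each statement's English description precedes it below -/
import Mathlib

section
/- Let V be a Q-algebra, let k, n be positive integers, and let π₀, …, πₙ ∈ V be idempotents such that πᵢ·πⱼ = 0 whenever i ≠ j and i − j < k. For each i define pᵢ := (1 − (1/2)πₙ) ⋯ (1 − (1/2)π_{i+1}) · πᵢ · (1 − (1/2)π_{i−1}) ⋯ (1 − (1/2)π₀). Then each pᵢ is an idempotent, and pᵢ·pⱼ = 0 whenever i ≠ j and i − j < k + 1. -/
/-!
Write `qₜ = 1 - ½πₜ`, so that `pᵢ = Lᵢ πᵢ Rᵢ` with `Lᵢ = qₙ ⋯ q_{i+1}` and `Rᵢ = q_{i-1} ⋯ q₀`.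
Since `πₛ πₜ = 0` for `s < t`, a factor `qₜ` is invisible next to `πᵢ` on the appropriate side,
and a product `Rⱼ Lᵢ` with `j ≤ i` collapses to `Rⱼ + Lᵢ - 1`. Hence `πᵢ (Rᵢ Lⱼ) πⱼ = πᵢ πⱼ` for
`i ≤ j`, which gives idempotency and the case `i < j`. For `j < i ≤ j + k` all factors strictly
between `j` and `i` are absorbed by `πᵢ` and `πⱼ`, and what remains is
`πᵢ (1 - ½πⱼ)(1 - ½πᵢ) πⱼ = πᵢπⱼ - ½πᵢπⱼ - ½πᵢπⱼ + ¼πᵢ(πⱼπᵢ)πⱼ = 0`.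
-/

/-- `(1 - (1/2)πₙ) ⋯ (1 - (1/2)π_{i+1}) · πᵢ · (1 - (1/2)π_{i-1}) ⋯ (1 - (1/2)π₀)` -/
def gramSchmidtStep {V : Type*} [Ring V] [Algebra ℚ V] (n : ℕ) (π : ℕ → V) (i : ℕ) : V :=
  (((List.range (n - i)).map (fun t => 1 - (2:ℚ)⁻¹ • π (n - t))).prod) * π i *
    (((List.range i).reverse.map (fun t => 1 - (2:ℚ)⁻¹ • π t)).prod)

section Ring

variable {R : Type*} [Ring R]

theorem List.prod_mul_eq_of_forall_mul_eq {l : List R} {x : R} (h : ∀ y ∈ l, y * x = x) :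
    l.prod * x = x := by
  induction l with
  | nil => simp
  | cons y l ih =>
    rw [List.prod_cons, mul_assoc, ih fun z hz => h z (List.mem_cons_of_mem y hz),
      h y List.mem_cons_self]

theorem List.mul_prod_eq_of_forall_mul_eq {l : List R} {x : R} (h : ∀ y ∈ l, x * y = x) :
    x * l.prod = x := by
  induction l with
  | nil => simp
  | cons y l ih =>
    rw [List.prod_cons, ← mul_assoc, h y List.mem_cons_self,
      ih fun z hz => h z (List.mem_cons_of_mem y hz)]

theorem List.prod_mul_eq_add_sub_one {l : List R} {x : R} (h : ∀ y ∈ l, (y - 1) * x = y - 1) :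
    l.prod * x = l.prod + x - 1 := by
  induction l with
  | nil => simp
  | cons y l ih =>
    have hy : y * x = y + x - 1 := by
      have := h y List.mem_cons_self
      rw [sub_mul, one_mul, sub_eq_iff_eq_add] at this
      rw [this]
      abel
    rw [List.prod_cons, mul_assoc, ih fun z hz => h z (List.mem_cons_of_mem y hz), mul_sub,
      mul_add, hy, mul_one]
    abel

theorem mul_mul_mul_eq_mul_of_mul_eq_add_sub_one {a b P Q : R} (hPb : P * b = b)
    (haQ : a * Q = a) (hPQ : P * Q = P + Q - 1) : a * (P * Q) * b = a * b := by
  rw [hPQ, mul_sub, mul_add, mul_one, haQ, sub_mul, add_mul, mul_assoc, hPb]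
  abel

end Ring

namespace GramSchmidt

variable {V : Type*} [Ring V] [Algebra ℚ V]

def halfCompl (x : V) : V := 1 - (2:ℚ)⁻¹ • x

theorem halfCompl_mul_of_mul_eq_zero {x y : V} (h : x * y = 0) : halfCompl x * y = y := by
  rw [halfCompl, sub_mul, one_mul, smul_mul_assoc, h, smul_zero, sub_zero]

theorem mul_halfCompl_of_mul_eq_zero {x y : V} (h : y * x = 0) : y * halfCompl x = y := by
  rw [halfCompl, mul_sub, mul_one, mul_smul_comm, h, smul_zero, sub_zero]

theorem mul_halfCompl_mul_halfCompl_mul_eq_zero {a b : V} (ha : IsIdempotentElem a)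
    (hb : IsIdempotentElem b) (hba : b * a = 0) : a * halfCompl b * (halfCompl a * b) = 0 := by
  have hab_b : a * b * b = a * b := by rw [mul_assoc, hb.eq]
  have ha_ab : a * (a * b) = a * b := by rw [← mul_assoc, ha.eq]
  have hab_ab : a * b * (a * b) = 0 := by rw [mul_assoc, ← mul_assoc b, hba, zero_mul, mul_zero]
  have hleft : a * halfCompl b = a - (2:ℚ)⁻¹ • (a * b) := by
    rw [halfCompl, mul_sub, mul_one, mul_smul_comm]
  have hright : halfCompl a * b = b - (2:ℚ)⁻¹ • (a * b) := by
    rw [halfCompl, sub_mul, one_mul, smul_mul_assoc]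
  rw [hleft, hright]
  simp only [mul_sub, sub_mul, smul_mul_assoc, mul_smul_comm, ha_ab, hab_b, hab_ab, smul_zero]
  module

/-- `descProd π a m = q_{a+m-1} ⋯ q_{a+1} q_a` with `qₜ = halfCompl (π t)`. -/
def descProd (π : ℕ → V) (a m : ℕ) : V :=
  ((List.range' a m).reverse.map fun t => halfCompl (π t)).prod

variable (π : ℕ → V)

theorem gramSchmidtStep_eq {n i : ℕ} (hi : i ≤ n) :
    gramSchmidtStep n π i = descProd π (i + 1) (n - i) * π i * descProd π 0 i := by
  have hleft : (List.range' (i + 1) (n - i)).reverse = (List.range (n - i)).map (n - ·) := by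
    rw [List.reverse_range']
    exact List.map_congr_left fun t _ => by omega
  rw [gramSchmidtStep, descProd, descProd, hleft, ← List.range_eq_range', List.map_map]
  rfl

theorem descProd_add (a m l : ℕ) :
    descProd π a (m + l) = descProd π (a + m) l * descProd π a m := by
  rw [descProd, descProd, descProd, ← List.range'_append, one_mul, List.reverse_append,
    List.map_append, List.prod_append]

theorem descProd_succ (a m : ℕ) :
    descProd π a (m + 1) = halfCompl (π (a + m)) * descProd π a m := by
  rw [descProd_add]
  simp [descProd]

theorem descProd_succ_add (a m l : ℕ) :
    descProd π a (m + 1 + l) =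
      descProd π (a + m + 1) l * (halfCompl (π (a + m)) * descProd π a m) := by
  rw [descProd_add, descProd_succ, ← add_assoc]

variable {π}

theorem descProd_mul_of_forall {a m : ℕ} {x : V} (h : ∀ t, a ≤ t → t < a + m → π t * x = 0) :
    descProd π a m * x = x := by
  refine List.prod_mul_eq_of_forall_mul_eq fun y hy => ?_
  obtain ⟨t, ht, rfl⟩ := List.mem_map.mp hy
  obtain ⟨h₁, h₂⟩ := List.mem_range'_1.mp (List.mem_reverse.mp ht)
  exact halfCompl_mul_of_mul_eq_zero (h t h₁ h₂)

theorem mul_descProd_of_forall {a m : ℕ} {x : V} (h : ∀ t, a ≤ t → t < a + m → x * π t = 0) :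
    x * descProd π a m = x := by
  refine List.mul_prod_eq_of_forall_mul_eq fun y hy => ?_
  obtain ⟨t, ht, rfl⟩ := List.mem_map.mp hy
  obtain ⟨h₁, h₂⟩ := List.mem_range'_1.mp (List.mem_reverse.mp ht)
  exact mul_halfCompl_of_mul_eq_zero (h t h₁ h₂)

theorem descProd_mul_descProd {a m b l : ℕ}
    (h : ∀ s t, a ≤ s → s < a + m → b ≤ t → t < b + l → π s * π t = 0) :
    descProd π a m * descProd π b l = descProd π a m + descProd π b l - 1 := by
  refine List.prod_mul_eq_add_sub_one fun y hy => ?_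
  obtain ⟨s, hs, rfl⟩ := List.mem_map.mp hy
  obtain ⟨h₁, h₂⟩ := List.mem_range'_1.mp (List.mem_reverse.mp hs)
  have hπ : π s * descProd π b l = π s := mul_descProd_of_forall fun t => h s t h₁ h₂
  rw [halfCompl, sub_sub_cancel_left, neg_mul, smul_mul_assoc, hπ]

section LowerOrthogonal

variable {n : ℕ} (hlow : ∀ s t, s < t → t ≤ n → π s * π t = 0)
include hlow

theorem descProd_zero_mul {i j : ℕ} (hij : i ≤ j) (hj : j ≤ n) : descProd π 0 i * π j = π j :=
  descProd_mul_of_forall fun t _ ht => hlow t j (by omega) hj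

theorem mul_descProd_succ {i j : ℕ} (hij : i ≤ j) : π i * descProd π (j + 1) (n - j) = π i :=
  mul_descProd_of_forall fun t h₁ h₂ => hlow i t (by omega) (by omega)

theorem descProd_zero_mul_descProd_succ {i j : ℕ} (hij : i ≤ j) :
    descProd π 0 i * descProd π (j + 1) (n - j) =
      descProd π 0 i + descProd π (j + 1) (n - j) - 1 :=
  descProd_mul_descProd fun s t _ hs ht₁ ht₂ => hlow s t (by omega) (by omega)

theorem gramSchmidtStep_mul_gramSchmidtStep_of_le {i j : ℕ} (hij : i ≤ j) (hj : j ≤ n) :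
    gramSchmidtStep n π i * gramSchmidtStep n π j =
      descProd π (i + 1) (n - i) * (π i * π j) * descProd π 0 j := by
  rw [gramSchmidtStep_eq π (hij.trans hj), gramSchmidtStep_eq π hj,
    ← mul_mul_mul_eq_mul_of_mul_eq_add_sub_one (descProd_zero_mul hlow hij hj)
      (mul_descProd_succ hlow hij) (descProd_zero_mul_descProd_succ hlow hij)]
  simp only [mul_assoc]

theorem isIdempotentElem_gramSchmidtStep {i : ℕ} (hidem : IsIdempotentElem (π i)) (hi : i ≤ n) :
    IsIdempotentElem (gramSchmidtStep n π i) := by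
  rw [IsIdempotentElem, gramSchmidtStep_mul_gramSchmidtStep_of_le hlow le_rfl hi, hidem.eq,
    gramSchmidtStep_eq π hi]

theorem gramSchmidtStep_mul_eq_zero_of_lt {i j : ℕ} (hij : i < j) (hj : j ≤ n) :
    gramSchmidtStep n π i * gramSchmidtStep n π j = 0 := by
  rw [gramSchmidtStep_mul_gramSchmidtStep_of_le hlow hij.le hj, hlow i j hij hj, mul_zero,
    zero_mul]

theorem gramSchmidtStep_mul_eq_zero_of_gt {k i j : ℕ}
    (hband : ∀ s t, t < s → s < t + k → s ≤ n → π s * π t = 0)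
    (hidem_i : IsIdempotentElem (π i)) (hidem_j : IsIdempotentElem (π j))
    (hji : j < i) (hik : i ≤ j + k) (hi : i ≤ n) :
    gramSchmidtStep n π i * gramSchmidtStep n π j = 0 := by
  obtain ⟨d, rfl⟩ : ∃ d, i = j + 1 + d := ⟨i - (j + 1), by omega⟩
  set a := π (j + 1 + d)
  set b := π j
  set M := descProd π (j + 1) d
  set Rj := descProd π 0 j
  set Li := descProd π (j + 1 + d + 1) (n - (j + 1 + d))
  have hRi : descProd π 0 (j + 1 + d) = M * (halfCompl b * Rj) := by
    simpa only [zero_add] using descProd_succ_add π 0 j d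
  have hLj : descProd π (j + 1) (n - j) = Li * (halfCompl a * M) := by
    rw [show n - j = d + 1 + (n - (j + 1 + d)) by omega, descProd_succ_add]
  have haM : a * M = a :=
    mul_descProd_of_forall fun t h₁ h₂ => hband _ t (by omega) (by omega) hi
  have hMb : M * b = b :=
    descProd_mul_of_forall fun t h₁ h₂ => hband t j (by omega) (by omega) (by omega)
  have hRb : Rj * (halfCompl a * b) = halfCompl a * b :=
    descProd_mul_of_forall fun t _ ht => by
      rw [← mul_assoc, mul_halfCompl_of_mul_eq_zero (hlow t _ (by omega) hi),
        hlow t j (by omega) (by omega)]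
  have haL : a * halfCompl b * Li = a * halfCompl b :=
    mul_descProd_of_forall fun t h₁ h₂ => by
      rw [mul_assoc, halfCompl_mul_of_mul_eq_zero (hlow j t (by omega) (by omega)),
        hlow _ t (by omega) (by omega)]
  rw [gramSchmidtStep_eq π hi, gramSchmidtStep_eq π (by omega), hRi, hLj]
  calc Li * a * (M * (halfCompl b * Rj)) * (Li * (halfCompl a * M) * b * Rj)
      = Li * (a * M * halfCompl b * (Rj * Li) * (halfCompl a * (M * b))) * Rj := by
        simp only [mul_assoc]
    _ = Li * (a * halfCompl b * (halfCompl a * b)) * Rj := by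
        rw [haM, hMb, mul_mul_mul_eq_mul_of_mul_eq_add_sub_one hRb haL
          (descProd_zero_mul_descProd_succ hlow (by omega))]
    _ = 0 := by
        rw [mul_halfCompl_mul_halfCompl_mul_eq_zero hidem_i hidem_j (hlow j _ hji hi), mul_zero,
          zero_mul]

end LowerOrthogonal

end GramSchmidt

theorem gram_schmidt_lemma_general {V : Type*} [Ring V] [Algebra ℚ V]
    (k n : ℕ) (π : ℕ → V)
    (hidem : ∀ i ≤ n, π i * π i = π i)
    (horth : ∀ i ≤ n, ∀ j ≤ n, i ≠ j → (i : ℤ) - j < k → π i * π j = 0) :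
    (∀ i ≤ n, gramSchmidtStep n π i * gramSchmidtStep n π i = gramSchmidtStep n π i) ∧
    (∀ i ≤ n, ∀ j ≤ n, i ≠ j → (i : ℤ) - j < k + 1 →
      gramSchmidtStep n π i * gramSchmidtStep n π j = 0) := by
  have hlow : ∀ s t, s < t → t ≤ n → π s * π t = 0 := fun s t hst ht =>
    horth s (by omega) t ht hst.ne (by omega)
  have hband : ∀ s t, t < s → s < t + k → s ≤ n → π s * π t = 0 := fun s t hts hsk hs =>
    horth s hs t (by omega) hts.ne' (by omega)
  refine ⟨fun i hi => GramSchmidt.isIdempotentElem_gramSchmidtStep hlow (hidem i hi) hi,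
    fun i hi j hj hne hik => ?_⟩
  rcases lt_or_gt_of_ne hne with hij | hji
  · exact GramSchmidt.gramSchmidtStep_mul_eq_zero_of_lt hlow hij hj
  · exact GramSchmidt.gramSchmidtStep_mul_eq_zero_of_gt hlow hband (hidem i hi) (hidem j hj) hji
      (by omega) hi

theorem gram_schmidt_lemma {V : Type*} [Ring V] [Algebra ℚ V]
    (k n : ℕ) (hk : 0 < k) (hn : 0 < n) (π : ℕ → V)
    (hidem : ∀ i ≤ n, π i * π i = π i)
    (horth : ∀ i ≤ n, ∀ j ≤ n, i ≠ j → (i : ℤ) - j < k → π i * π j = 0) :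
    (∀ i ≤ n, gramSchmidtStep n π i * gramSchmidtStep n π i = gramSchmidtStep n π i) ∧
    (∀ i ≤ n, ∀ j ≤ n, i ≠ j → (i : ℤ) - j < k + 1 →
      gramSchmidtStep n π i * gramSchmidtStep n π j = 0) :=
  gram_schmidt_lemma_general k n π hidem horth
end

section
/- Let V be a Q-algebra and let π₀, …, πₙ ∈ V be idempotents with π_r·π_s = 0 for all r < s. For each r set p_r := (1 − (1/2)πₙ) ⋯ (1 − (1/2)π_{r+1}) · π_r · (1 − (1/2)π_{r−1}) ⋯ (1 − (1/2)π₀). Then for every r one has π_r · p_r · π_r = π_r and p_r · π_r · p_r = p_r. -/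
section Monoid

variable {M : Type*} [Monoid M]

theorem List.mul_prod_eq_self {x : M} {l : List M} (h : ∀ a ∈ l, x * a = x) :
    x * l.prod = x :=
  List.prod_induction (fun a => x * a = x) (fun a b ha hb => by rw [← mul_assoc, ha, hb])
    (mul_one x) h

theorem List.prod_mul_eq_self {x : M} {l : List M} (h : ∀ a ∈ l, a * x = x) :
    l.prod * x = x :=
  List.prod_induction (fun a => a * x = x) (fun a b ha hb => by rw [mul_assoc, hb, ha])
    (one_mul x) h

theorem IsIdempotentElem.mul_sandwich_mul_eq_self {e a b : M} (he : IsIdempotentElem e)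
    (ha : e * a = e) (hb : b * e = e) :
    e * (a * e * b) * e = e ∧ a * e * b * e * (a * e * b) = a * e * b := by
  constructor
  · rw [← mul_assoc, ← mul_assoc, ha, he.eq, mul_assoc, hb, he.eq]
  · calc a * e * b * e * (a * e * b) = a * (e * (b * e) * a * e) * b := by
          simp only [mul_assoc]
      _ = a * e * b := by rw [hb, he.eq, ha, he.eq]

end Monoid

section Algebra

variable {R V : Type*} [CommSemiring R] [Ring V] [Algebra R V]

theorem mul_one_sub_smul_eq_self {e f : V} (h : e * f = 0) (c : R) : e * (1 - c • f) = e := by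
  rw [mul_sub, mul_one, mul_smul_comm, h, smul_zero, sub_zero]

theorem one_sub_smul_mul_eq_self {e f : V} (h : f * e = 0) (c : R) : (1 - c • f) * e = e := by
  rw [sub_mul, one_mul, smul_mul_assoc, h, smul_zero, sub_zero]

end Algebra

theorem gram_schmidt_mutually_inverse {V : Type*} [Ring V] [Algebra ℚ V]
    (n : ℕ) (π : ℕ → V)
    (hidem : ∀ i ≤ n, π i * π i = π i)
    (horth : ∀ r ≤ n, ∀ s ≤ n, r < s → π r * π s = 0) :
    ∀ r ≤ n, π r * gramSchmidtStep n π r * π r = π r ∧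
      gramSchmidtStep n π r * π r * gramSchmidtStep n π r = gramSchmidtStep n π r := by
  intro r hr
  have hleft : π r * ((List.range (n - r)).map (fun t => 1 - (2:ℚ)⁻¹ • π (n - t))).prod = π r :=
    List.mul_prod_eq_self <| by
      simp only [List.mem_map, List.mem_range, forall_exists_index, and_imp]
      rintro _ t ht rfl
      exact mul_one_sub_smul_eq_self (horth r hr (n - t) (by omega) (by omega)) _
  have hright : ((List.range r).reverse.map (fun t => 1 - (2:ℚ)⁻¹ • π t)).prod * π r = π r :=
    List.prod_mul_eq_self <| by
      simp only [List.mem_map, List.mem_reverse, List.mem_range, forall_exists_index, and_imp]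
      rintro _ t ht rfl
      exact one_sub_smul_mul_eq_self (horth t (by omega) r hr ht) _
  exact IsIdempotentElem.mul_sandwich_mul_eq_self (hidem r hr) hleft hright
end

section
/- Let V be a Q-algebra equipped with an anti-automorphism τ (i.e. τ is additive and Q-linear, τ(xy) = τ(y)τ(x), τ(1) = 1), and let π₀, …, πₙ ∈ V be idempotents satisfying τ(πᵢ) = π_{n−i} for all i. Define p_i := (1 − (1/2)πₙ) ⋯ (1 − (1/2)π_{i+1}) · πᵢ · (1 − (1/2)π_{i−1}) ⋯ (1 − (1/2)π₀). Then τ(p_i) = p_{n−i} for all i. -/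
theorem gram_schmidt_self_dual {V : Type*} [Ring V] [Algebra ℚ V]
    (n : ℕ) (π : ℕ → V) (τ : V → V)
    (hadd : ∀ x y, τ (x + y) = τ x + τ y)
    (hsmul : ∀ (q : ℚ) (x : V), τ (q • x) = q • τ x)
    (hmul : ∀ x y, τ (x * y) = τ y * τ x)
    (hone : τ 1 = 1)
    (hidem : ∀ i ≤ n, π i * π i = π i)
    (hdual : ∀ i ≤ n, τ (π i) = π (n - i)) :
    ∀ i ≤ n, τ (gramSchmidtStep n π i) = gramSchmidtStep n π (n - i) := by
  have hsub : ∀ x y, τ (x - y) = τ x - τ y := by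
    intro x y
    have := hadd (x - y) y
    simp only [sub_add_cancel] at this
    rw [this, add_sub_cancel_right]
  have hfac : ∀ t ≤ n, τ (1 - (2:ℚ)⁻¹ • π t) = 1 - (2:ℚ)⁻¹ • π (n - t) := by
    intro t ht
    rw [hsub, hone, hsmul, hdual t ht]
  have hprod : ∀ l : List V, τ l.prod = (l.reverse.map τ).prod := by
    intro l
    induction l with
    | nil => simpa using hone
    | cons a l ih =>
        simp only [List.prod_cons, hmul, ih, List.reverse_cons, List.map_append,
          List.prod_append, List.map_cons, List.map_nil, List.prod_cons, List.prod_nil,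
          mul_one]
  intro i hi
  unfold gramSchmidtStep
  rw [hmul, hmul, hdual i hi]
  rw [hprod, hprod]
  have h1 : ((((List.range (n - i)).map (fun t => 1 - (2:ℚ)⁻¹ • π (n - t))).reverse.map τ)).prod
      = (((List.range (n - i)).reverse).map (fun t => 1 - (2:ℚ)⁻¹ • π t)).prod := by
    rw [← List.map_reverse, List.map_map]
    congr 1
    apply List.map_congr_left
    intro t ht
    rw [List.mem_reverse, List.mem_range] at ht
    have htn : t ≤ n := le_trans (le_of_lt ht) (Nat.sub_le n i)
    simp only [Function.comp_apply]
    rw [hfac (n - t) (Nat.sub_le n t), Nat.sub_sub_self htn]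
  have h2 : (((((List.range i).reverse).map (fun t => 1 - (2:ℚ)⁻¹ • π t)).reverse.map τ)).prod
      = ((List.range (n - (n - i))).map (fun t => 1 - (2:ℚ)⁻¹ • π (n - t))).prod := by
    rw [← List.map_reverse, List.map_map, List.reverse_reverse, Nat.sub_sub_self hi]
    congr 1
    apply List.map_congr_left
    intro t ht
    rw [List.mem_range] at ht
    simp only [Function.comp_apply]
    exact hfac t (le_trans (le_of_lt ht) hi)
  rw [h1, h2, mul_assoc]
end

section
/- Let M = A ⊕ B be a direct sum of modules over a ring R and let p : M → M be an idempotent R-linear endomorphism such that the composition A ↪ M → M → B (inclusion, then p, then projection to B) vanishes. Let p_A : A → A and p_B : B → B be the induced corner maps. Then p_A and p_B are idempotent, and p restricts to an R-module isomorphism from (im p_A) ⊕ (im p_B) (viewed as a submodule of M) onto im(p). -/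
theorem triangular_lemma_modules {R : Type*} [Ring R]
    {A B : Type*} [AddCommGroup A] [AddCommGroup B] [Module R A] [Module R B]
    (p : (A × B) →ₗ[R] (A × B)) (hp : p ∘ₗ p = p)
    (htri : ∀ a : A, (p (a, 0)).2 = 0) :
    let pA : A →ₗ[R] A := (LinearMap.fst R A B) ∘ₗ p ∘ₗ (LinearMap.inl R A B)
    let pB : B →ₗ[R] B := (LinearMap.snd R A B) ∘ₗ p ∘ₗ (LinearMap.inr R A B)
    pA ∘ₗ pA = pA ∧ pB ∘ₗ pB = pB ∧
      ∃ e : ((LinearMap.range pA).prod (LinearMap.range pB)) ≃ₗ[R] LinearMap.range p,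
        ∀ x : (LinearMap.range pA).prod (LinearMap.range pB), (e x : A × B) = p x := by
  intro pA pB
  have happ : ∀ x : A × B, p (p x) = p x := fun x => LinearMap.congr_fun hp x
  have hpA0 : ∀ a : A, p (a, 0) = (pA a, 0) := fun a => Prod.ext rfl (htri a)
  have hpsplit : ∀ (a : A) (b : B), p (a, b) = (pA a + (p ((0:A), b)).1, pB b) := by
    intro a b
    have h : (a, b) = ((a, 0) : A × B) + (0, b) := by simp
    rw [h, map_add, hpA0]
    have h2 : (p ((0:A), b)).2 = pB b := rfl
    ext
    · simp
    · simp [h2]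
  have hAidem : ∀ a, pA (pA a) = pA a := by
    intro a
    have h := congrArg Prod.fst (happ (a, 0))
    rw [hpA0 a, hpA0 (pA a)] at h
    simpa using h
  have hBidem : ∀ b, pB (pB b) = pB b := by
    intro b
    have hc : p ((0:A), b) = ((p ((0:A), b)).1, pB b) := rfl
    have h := congrArg Prod.snd (happ ((0:A), b))
    rw [hc, hpsplit] at h
    simpa using h
  refine ⟨LinearMap.ext hAidem, LinearMap.ext hBidem, ?_⟩
  set S := (LinearMap.range pA).prod (LinearMap.range pB) with hS
  have hmem : ∀ x : S, p (x : A × B) ∈ LinearMap.range p := fun x => ⟨x, rfl⟩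
  let f : S →ₗ[R] LinearMap.range p :=
    LinearMap.codRestrict _ (p ∘ₗ S.subtype) hmem
  have hbij : Function.Bijective f := by
    constructor
    · rw [injective_iff_map_eq_zero]
      rintro ⟨⟨a, b⟩, hx⟩ hfx
      obtain ⟨⟨a', ha⟩, ⟨b', hb⟩⟩ := hx
      dsimp only at ha hb
      have haa : pA a = a := by rw [← ha, hAidem]
      have hbb : pB b = b := by rw [← hb, hBidem]
      have h0 : p (a, b) = 0 := congrArg Subtype.val hfx
      rw [hpsplit a b] at h0
      have hb0 : b = 0 := by rw [← hbb]; exact congrArg Prod.snd h0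
      subst hb0
      have h1 := congrArg Prod.fst h0
      simp [haa, show p ((0:A), (0:B)) = 0 from map_zero p] at h1
      simp [Prod.ext_iff, h1]
    · rintro ⟨y, x, hx⟩
      have hy : p y = y := by rw [← hx, happ]
      obtain ⟨y1, y2⟩ := y
      have hsp := hpsplit y1 y2
      rw [hy] at hsp
      have hy2 : pB y2 = y2 := (congrArg Prod.snd hsp).symm
      have hy1 : pA y1 + (p ((0:A), y2)).1 = y1 := (congrArg Prod.fst hsp).symm
      refine ⟨⟨(pA y1, y2), ⟨⟨y1, rfl⟩, ⟨y2, hy2⟩⟩⟩, ?_⟩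
      apply Subtype.ext
      show p (pA y1, y2) = (y1, y2)
      rw [hpsplit, hAidem y1, hy1, hy2]
  exact ⟨LinearEquiv.ofBijective f hbij, fun x => rfl⟩
end

section
/- Let R be a ring with an anti-automorphism τ (τ(xy) = τ(y)τ(x), τ(1) = 1), and let f, g, L ∈ R with g·f = 1. Set p := f·g and q := τ(p). Suppose u := g·L·τ(g) is invertible in R with inverse α. Then the element q·τ(g)·α·g·p is a two-sided inverse of p·L·q in the corner sense: (p·L·q)·(q·τ(g)·α·g·p) = p and (q·τ(g)·α·g·p)·(p·L·q) = q. -/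
/-!
Write `q = τ(f·g) = f'·g'` with `f' := τ g`, `g' := τ f`; then `g'·f' = τ(g·f) = 1`, so both `p` and
`q` are split idempotents, and the candidate inverse collapses to `f'·α·g`. The two identities
are then pure cancellation: `g·f = 1` and `g'·f' = 1` erase the inner factors of each product,
leaving `u·α` or `α·u` in the middle, where `u = g·L·f'`.
-/

section SplitCorner

variable {M : Type*} [Monoid M] {f g f' g' L α : M}

theorem split_corner_mul_lift_eq (hgf' : g' * f' = 1) (hα : g * L * f' * α = 1) :
    (f * g * L * f' * g') * (f' * α * g) = f * g :=
  calc (f * g * L * f' * g') * (f' * α * g) = f * (g * L * f' * (g' * f') * α) * g := by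
        simp only [mul_assoc]
    _ = f * g := by rw [hgf', mul_one, hα, mul_one]

theorem lift_mul_split_corner_eq (hgf : g * f = 1) (hα : α * (g * L * f') = 1) :
    (f' * α * g) * (f * g * L * f' * g') = f' * g' :=
  calc (f' * α * g) * (f * g * L * f' * g') = f' * (α * (g * f * g * L * f')) * g' := by
        simp only [mul_assoc]
    _ = f' * g' := by rw [hgf, one_mul, hα, mul_one]

end SplitCorner

theorem motivic_lefschetz_inverse {R : Type*} [Ring R]
    (τ : R → R)
    (hmul : ∀ x y, τ (x * y) = τ y * τ x)
    (hone : τ 1 = 1)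
    (f g L α : R) (hgf : g * f = 1)
    (hα₁ : (g * L * τ g) * α = 1) (hα₂ : α * (g * L * τ g) = 1) :
    let p := f * g
    let q := τ p
    (p * L * q) * (q * τ g * α * g * p) = p ∧
      (q * τ g * α * g * p) * (p * L * q) = q := by
  intro p q
  have hτgf : τ f * τ g = 1 := by rw [← hmul, hgf, hone]
  have hq : q = τ g * τ f := hmul f g
  have hinv : q * τ g * α * g * p = τ g * α * g :=
    calc q * τ g * α * g * p = τ g * (τ f * τ g) * α * (g * f) * g := by
          simp only [hq, p, mul_assoc]
      _ = τ g * α * g := by rw [hτgf, hgf, mul_one, mul_one]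
  have hcorner : p * L * q = f * g * L * τ g * τ f := by
    simp only [hq, p, mul_assoc]
  rw [hinv, hcorner, hq]
  exact ⟨split_corner_mul_lift_eq hτgf hα₁, lift_mul_split_corner_eq hgf hα₂⟩
end
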